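/- Let f be analytic on the open unit disk 𝔻 with f(0) = 0 and f'(0) = 1. If |z f''(z) + f'(z) + (f'(z))² − 2| < 5/2 for all z ∈ 𝔻, then Re f'(z) > 0 for all z ∈ 𝔻. -/

import Mathlib

/-!
Put `p = f'`, so `p(0) = 1`. If `Re p` vanishes somewhere in the disk, take such a zero `z₀` of
least modulus; then `Re p > 0` on `|z| < |z₀|`. Applying the Schwarz lemma to
`(1 - p(z₀ z)) / (1 + p(z₀ z))` gives `|1 - p(z₀ s)|² ≤ s² |1 + p(z₀ s)|²` for `0 < s < 1`, with
equality at `s = 1`; comparing derivatives there gives the Miller–Mocanu bound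
`Re (z₀ p'(z₀)) ≤ -(1 + t²)/2`, where `p(z₀) = i t`. Hence
`Re (z₀ p' + p + p² - 2) ≤ -(1 + t²)/2 - t² - 2 ≤ -5/2` at `z₀`, contradicting the hypothesis.
-/

open Complex Metric Set Filter Topology

theorem HasDerivAt.nonpos_of_eventually_le_left {φ : ℝ → ℝ} {φ' a : ℝ} (h : HasDerivAt φ φ' a)
    (hle : ∀ᶠ s in 𝓝[<] a, φ a ≤ φ s) : φ' ≤ 0 := by
  refine le_of_tendsto (h.tendsto_slope.mono_left (nhdsLT_le_nhdsNE a)) ?_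
  filter_upwards [hle, self_mem_nhdsWithin] with s hs hsa
  rw [slope_def_field]
  exact div_nonpos_of_nonneg_of_nonpos (sub_nonneg.mpr hs) (sub_nonpos.mpr (le_of_lt hsa))

theorem exists_zero_and_pos_on_ball {E : Type*} [NormedAddCommGroup E] [NormedSpace ℝ E]
    [ProperSpace E] {g : E → ℝ} {x : E} (hg : ContinuousOn g (closedBall 0 ‖x‖))
    (hg0 : 0 < g 0) (hgx : g x ≤ 0) :
    ∃ z₀ ∈ closedBall (0 : E) ‖x‖, g z₀ = 0 ∧ ∀ y ∈ ball (0 : E) ‖z₀‖, 0 < g y := by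
  have ivt : ∀ y ∈ closedBall (0 : E) ‖x‖, g y ≤ 0 → ∃ y' ∈ closedBall (0 : E) ‖y‖, g y' = 0 := by
    intro y hy hgy
    have hsub : closedBall (0 : E) ‖y‖ ⊆ closedBall 0 ‖x‖ :=
      closedBall_subset_closedBall (mem_closedBall_zero_iff.mp hy)
    exact (convex_closedBall (0 : E) ‖y‖).isPreconnected.intermediate_value
      (mem_closedBall_zero_iff.mpr le_rfl) (mem_closedBall_self (norm_nonneg y)) (hg.mono hsub)
      ⟨hgy, hg0.le⟩
  set K := closedBall (0 : E) ‖x‖ ∩ g ⁻¹' {0}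
  have hK : IsCompact K := (isCompact_closedBall 0 ‖x‖).of_isClosed_subset
    (hg.preimage_isClosed_of_isClosed isClosed_closedBall isClosed_singleton) inter_subset_left
  obtain ⟨y₀, hy₀x, hgy₀⟩ := ivt x (mem_closedBall_zero_iff.mpr le_rfl) hgx
  obtain ⟨z₀, ⟨hz₀x, hgz₀⟩, hmin⟩ := hK.exists_isMinOn
    ⟨y₀, closedBall_subset_closedBall le_rfl hy₀x, hgy₀⟩ continuous_norm.continuousOn
  refine ⟨z₀, hz₀x, hgz₀, fun y hy => not_le.mp fun hgy => ?_⟩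
  have hyz₀ : ‖y‖ < ‖z₀‖ := mem_ball_zero_iff.mp hy
  have hyx : y ∈ closedBall (0 : E) ‖x‖ :=
    mem_closedBall_zero_iff.mpr (hyz₀.le.trans (mem_closedBall_zero_iff.mp hz₀x))
  obtain ⟨y', hy'y, hgy'⟩ := ivt y hyx hgy
  have hy'K : y' ∈ K := ⟨closedBall_subset_closedBall (mem_closedBall_zero_iff.mp hyx) hy'y, hgy'⟩
  exact (hmin hy'K).not_gt ((mem_closedBall_zero_iff.mp hy'y).trans_lt hyz₀)

theorem norm_one_sub_lt_norm_one_add {w : ℂ} (hw : 0 < w.re) : ‖1 - w‖ < ‖1 + w‖ := by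
  rw [← sq_lt_sq₀ (norm_nonneg _) (norm_nonneg _), Complex.sq_norm, Complex.sq_norm,
    normSq_apply, normSq_apply]
  simp only [sub_re, add_re, sub_im, add_im, one_re, one_im]
  nlinarith

theorem norm_one_sub_le_mul_norm_one_add_of_re_pos {q : ℂ → ℂ}
    (hq : DifferentiableOn ℂ q (ball 0 1)) (hq0 : q 0 = 1)
    (hre : ∀ z ∈ ball (0 : ℂ) 1, 0 < (q z).re) {z : ℂ} (hz : z ∈ ball (0 : ℂ) 1) :
    ‖1 - q z‖ ≤ ‖z‖ * ‖1 + q z‖ := by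
  have hden : ∀ z ∈ ball (0 : ℂ) 1, 1 + q z ≠ 0 := fun z hz h => by
    simpa [h] using (norm_nonneg _).trans_lt (norm_one_sub_lt_norm_one_add (hre z hz))
  have hmaps : MapsTo (fun z => (1 - q z) / (1 + q z)) (ball 0 1) (closedBall 0 1) := by
    intro z hz
    rw [mem_closedBall_zero_iff, norm_div, div_le_one (norm_pos_iff.mpr (hden z hz))]
    exact (norm_one_sub_lt_norm_one_add (hre z hz)).le
  have hschwarz := norm_le_norm_of_mapsTo_ball (f := fun z => (1 - q z) / (1 + q z))
    (((differentiableOn_const 1).sub hq).div ((differentiableOn_const 1).add hq) hden) hmaps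
    (by simp [hq0]) (mem_ball_zero_iff.mp hz)
  rwa [norm_div, div_le_iff₀ (norm_pos_iff.mpr (hden z hz))] at hschwarz

theorem re_le_of_hasDerivAt_one_of_re_eq_zero {q : ℂ → ℂ} {q' : ℂ}
    (hq : DifferentiableOn ℂ q (ball 0 1)) (hq0 : q 0 = 1)
    (hre : ∀ z ∈ ball (0 : ℂ) 1, 0 < (q z).re) (hq1 : HasDerivAt q q' 1)
    (hre1 : (q 1).re = 0) : q'.re ≤ -(1 + (q 1).im ^ 2) / 2 := by
  -- `φ s = s² ‖1 + q s‖² - ‖1 - q s‖²`, which is `≥ 0` on `(0, 1)` by the Schwarz lemma.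
  set φ : ℝ → ℝ := fun s => 2 * (1 + s ^ 2) * (q s).re + (s ^ 2 - 1) * (1 + ‖q s‖ ^ 2)
  rw [← ofReal_one] at hq1
  have hq1' : HasDerivAt (fun s : ℝ => q s) q' 1 := hq1.comp_ofReal
  have hφ : HasDerivAt φ (4 * q'.re + 2 * (1 + ‖q 1‖ ^ 2)) 1 := by
    have hsq : HasDerivAt (fun s : ℝ => s ^ 2) 2 1 := by simpa using hasDerivAt_pow 2 (1 : ℝ)
    have hre' : HasDerivAt (fun s : ℝ => (q s).re) q'.re 1 := hq1.real_of_complex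
    refine ((((hsq.const_add 1).const_mul 2).mul hre').add
      ((hsq.sub_const 1).mul (hq1'.norm_sq.const_add 1))).congr_deriv ?_
    norm_num [hre1]
  have hφ_nonneg : ∀ᶠ s in 𝓝[<] (1 : ℝ), φ 1 ≤ φ s := by
    filter_upwards [Ioo_mem_nhdsLT (zero_lt_one' ℝ)] with s hs
    have hs_ball : (s : ℂ) ∈ ball (0 : ℂ) 1 := by simp [abs_of_pos hs.1, hs.2]
    have hschwarz := norm_one_sub_le_mul_norm_one_add_of_re_pos hq hq0 hre hs_ball
    rw [norm_real, Real.norm_of_nonneg hs.1.le] at hschwarz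
    have hsq := pow_le_pow_left₀ (norm_nonneg _) hschwarz 2
    simp only [φ, ofReal_one, hre1, mul_pow, Complex.sq_norm, normSq_apply, sub_re, add_re,
      sub_im, add_im, one_re, one_im] at hsq ⊢
    linarith
  have := hφ.nonpos_of_eventually_le_left hφ_nonneg
  nlinarith [sq_norm_sub_sq_re (q 1)]

theorem re_mul_deriv_le_of_re_eq_zero {p : ℂ → ℂ} {z₀ : ℂ}
    (hp : DifferentiableOn ℂ p (ball 0 ‖z₀‖)) (hpz₀ : DifferentiableAt ℂ p z₀) (hp0 : p 0 = 1)
    (hre : ∀ z ∈ ball (0 : ℂ) ‖z₀‖, 0 < (p z).re) (hre₀ : (p z₀).re = 0) :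
    (z₀ * deriv p z₀).re ≤ -(1 + (p z₀).im ^ 2) / 2 := by
  have hz₀ : z₀ ≠ 0 := by rintro rfl; simp [hp0] at hre₀
  have hmaps : MapsTo (z₀ * ·) (ball (0 : ℂ) 1) (ball 0 ‖z₀‖) := fun z hz => by
    simpa [norm_mul, hz₀] using hz
  have hq1 : HasDerivAt (fun z => p (z₀ * z)) (deriv p z₀ * z₀) 1 := by
    have hpz₀' : HasDerivAt p (deriv p z₀) (z₀ * 1) := by simpa using hpz₀.hasDerivAt
    have hmul : HasDerivAt (z₀ * ·) z₀ 1 := by simpa using (hasDerivAt_id (1 : ℂ)).const_mul z₀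
    exact hpz₀'.comp 1 hmul
  have := re_le_of_hasDerivAt_one_of_re_eq_zero
    (hp.comp (differentiableOn_id.const_mul z₀) hmaps) (by simp [hp0])
    (fun z hz => hre _ (hmaps hz)) hq1 (by simpa using hre₀)
  simpa [mul_comm] using this

theorem five_div_two_le_norm_of_re_eq_zero {a b : ℂ} (hb : b.re = 0)
    (ha : a.re ≤ -(1 + b.im ^ 2) / 2) : 5 / 2 ≤ ‖a + b + b ^ 2 - 2‖ := by
  have hre : (a + b + b ^ 2 - 2).re = a.re - b.im ^ 2 - 2 := by
    simp [sq, hb]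
    ring
  have := neg_le_of_abs_le (abs_re_le_norm (a + b + b ^ 2 - 2))
  nlinarith [sq_nonneg b.im]

theorem stmt_3 (f : ℂ → ℂ)
    (hf : AnalyticOnNhd ℂ f (ball (0 : ℂ) 1))
    (hf'0 : deriv f 0 = 1)
    (hineq : ∀ z ∈ ball (0 : ℂ) 1,
      ‖z * deriv (deriv f) z + deriv f z + (deriv f z) ^ 2 - 2‖ < 5 / 2) :
    ∀ z ∈ ball (0 : ℂ) 1, 0 < (deriv f z).re := by
  intro z hz
  by_contra! hz_re
  have hp : AnalyticOnNhd ℂ (deriv f) (ball 0 1) := hf.deriv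
  have hsub : closedBall (0 : ℂ) ‖z‖ ⊆ ball 0 1 := closedBall_subset_ball (mem_ball_zero_iff.mp hz)
  obtain ⟨z₀, hz₀, hre₀, hpos⟩ := exists_zero_and_pos_on_ball (g := fun w => (deriv f w).re)
    (continuous_re.comp_continuousOn (hp.continuousOn.mono hsub)) (by simp [hf'0]) hz_re
  have hz₀_ball : z₀ ∈ ball (0 : ℂ) 1 := hsub hz₀
  have hbound := re_mul_deriv_le_of_re_eq_zero
    (hp.differentiableOn.mono (ball_subset_ball (mem_ball_zero_iff.mp hz₀_ball).le))
    (hp z₀ hz₀_ball).differentiableAt hf'0 hpos hre₀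
  exact (hineq z₀ hz₀_ball).not_ge (five_div_two_le_norm_of_re_eq_zero hre₀ hbound)
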